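/- Let F and S be commuting positive semidefinite operators on a finite-dimensional Hilbert space, and let X be any operator. Then √(√F⁺ S √F⁺)⁺ · √F⁺ X √F⁺ · √(√F⁺ S √F⁺)⁺ = √(Π_F S)⁺ · X · √(Π_F S)⁺, where Π_F is the orthogonal projection onto the support (range) of F and ⁺ denotes the Moore–Penrose pseudo-inverse. In particular, if additionally the support of S is contained in the support of F, this equals √S⁺ X √S⁺. -/

import Mathlib

open Matrix
open scoped ComplexOrder

/-- `B` is the Moore–Penrose pseudo-inverse of `A`. -/
def IsMoorePenrose {n : Type*} [Fintype n] (A B : Matrix n n ℂ) : Prop :=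
  A * B * A = A ∧ B * A * B = B ∧ (A * B)ᴴ = A * B ∧ (B * A)ᴴ = B * A

/-- The positive semidefinite square root of a positive semidefinite matrix
(the definition removed from Mathlib, restored with its old value). -/
noncomputable def Matrix.PosSemidef.sqrt {n 𝕜 : Type*} [Fintype n] [RCLike 𝕜] [DecidableEq n]
    {A : Matrix n n 𝕜} (hA : A.PosSemidef) : Matrix n n 𝕜 :=
  hA.1.eigenvectorUnitary.1 * diagonal ((↑) ∘ Real.sqrt ∘ hA.1.eigenvalues) *
    (star hA.1.eigenvectorUnitary : Matrix n n 𝕜)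

section SqrtAux

open scoped MatrixOrder

variable {n : Type*} [Fintype n] [DecidableEq n]

lemma Matrix.PosSemidef.sqrt_eq_cfc_sqrt {A : Matrix n n ℂ} (hA : A.PosSemidef) :
    hA.sqrt = CFC.sqrt A := by
  rw [CFC.sqrt_eq_cfc, cfc_nnreal_eq_real _ A hA.nonneg, hA.1.cfc_eq]
  rw [Matrix.IsHermitian.cfc, Unitary.conjStarAlgAut_apply, Matrix.PosSemidef.sqrt]
  have hsq : (fun x : ℝ => ((NNReal.sqrt x.toNNReal : NNReal) : ℝ)) = Real.sqrt := by
    funext x; unfold Real.sqrt; rfl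
  rw [hsq]

lemma Matrix.PosSemidef.posSemidef_sqrt {A : Matrix n n ℂ} (hA : A.PosSemidef) :
    hA.sqrt.PosSemidef := by
  rw [hA.sqrt_eq_cfc_sqrt]
  exact nonneg_iff_posSemidef.mp (CFC.sqrt_nonneg A)

lemma Matrix.PosSemidef.sqrt_mul_self {A : Matrix n n ℂ} (hA : A.PosSemidef) :
    hA.sqrt * hA.sqrt = A := by
  rw [hA.sqrt_eq_cfc_sqrt]
  exact CFC.sqrt_mul_sqrt_self A hA.nonneg

lemma Matrix.PosSemidef.eq_sqrt_of_sq_eq {A B : Matrix n n ℂ} (hA : A.PosSemidef)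
    (hB : B.PosSemidef) (hAB : A ^ 2 = B) : A = hB.sqrt := by
  rw [hB.sqrt_eq_cfc_sqrt, eq_comm, CFC.sqrt_eq_iff B A hB.nonneg hA.nonneg, ← sq, hAB]

end SqrtAux

section Aux

variable {n : Type*} [Fintype n] [DecidableEq n]

private lemma aux1 {A B C : Matrix n n ℂ} (b3 : (A * B)ᴴ = A * B)
    (c1 : A * C * A = A) (c3 : (A * C)ᴴ = A * C) :
    A * B = (A * B) * (A * C) := by
  calc A * B = (A * B)ᴴ := b3.symm
    _ = ((A * C * A) * B)ᴴ := by rw [c1]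
    _ = ((A * C) * (A * B))ᴴ := by simp only [mul_assoc]
    _ = (A * B)ᴴ * (A * C)ᴴ := conjTranspose_mul _ _
    _ = (A * B) * (A * C) := by rw [b3, c3]

private lemma aux2 {A B C : Matrix n n ℂ} (b4 : (B * A)ᴴ = B * A)
    (c1 : A * C * A = A) (c4 : (C * A)ᴴ = C * A) :
    B * A = (C * A) * (B * A) := by
  calc B * A = (B * A)ᴴ := b4.symm
    _ = (B * (A * C * A))ᴴ := by rw [c1]
    _ = ((B * A) * (C * A))ᴴ := by simp only [mul_assoc]
    _ = (C * A)ᴴ * (B * A)ᴴ := conjTranspose_mul _ _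
    _ = (C * A) * (B * A) := by rw [b4, c4]

/-- Uniqueness of the Moore–Penrose inverse. -/
lemma mp_unique {A B C : Matrix n n ℂ} (hB : IsMoorePenrose A B)
    (hC : IsMoorePenrose A C) : B = C := by
  obtain ⟨b1, b2, b3, b4⟩ := hB
  obtain ⟨c1, c2, c3, c4⟩ := hC
  have e2 := aux1 c3 b1 b3
  have hAB : A * B = A * C :=
    calc A * B = (A * B) * (A * C) := aux1 b3 c1 c3
      _ = ((A * C) * (A * B))ᴴ := by rw [conjTranspose_mul, b3, c3]
      _ = (A * C)ᴴ := by rw [← e2]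
      _ = A * C := c3
  have f2 := aux2 c4 b1 b4
  have hBA : B * A = C * A :=
    calc B * A = (C * A) * (B * A) := aux2 b4 c1 c4
      _ = ((B * A) * (C * A))ᴴ := by rw [conjTranspose_mul, b4, c4]
      _ = (C * A)ᴴ := by rw [← f2]
      _ = C * A := c4
  calc B = B * A * B := b2.symm
    _ = C * A * B := by rw [hBA]
    _ = C * (A * B) := by rw [mul_assoc]
    _ = C * (A * C) := by rw [hAB]
    _ = C * A * C := by rw [mul_assoc]
    _ = C := c2

/-- The Moore–Penrose inverse of a Hermitian matrix is Hermitian. -/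
lemma herm_pinv {A B : Matrix n n ℂ} (hA : A.IsHermitian)
    (h : IsMoorePenrose A B) : B.IsHermitian := by
  obtain ⟨b1, b2, b3, b4⟩ := h
  have hBH : IsMoorePenrose A Bᴴ := by
    refine ⟨?_, ?_, ?_, ?_⟩
    · calc A * Bᴴ * A = Aᴴ * Bᴴ * Aᴴ := by rw [hA.eq]
        _ = (A * B * A)ᴴ := by simp only [conjTranspose_mul, mul_assoc]
        _ = Aᴴ := by rw [b1]
        _ = A := hA.eq
    · calc Bᴴ * A * Bᴴ = Bᴴ * Aᴴ * Bᴴ := by rw [hA.eq]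
        _ = (B * A * B)ᴴ := by simp only [conjTranspose_mul, mul_assoc]
        _ = Bᴴ := by rw [b2]
    · calc (A * Bᴴ)ᴴ = B * A := by
            rw [conjTranspose_mul, conjTranspose_conjTranspose, hA.eq]
        _ = (B * A)ᴴ := b4.symm
        _ = Aᴴ * Bᴴ := conjTranspose_mul _ _
        _ = A * Bᴴ := by rw [hA.eq]
    · calc (Bᴴ * A)ᴴ = A * B := by
            rw [conjTranspose_mul, conjTranspose_conjTranspose, hA.eq]
        _ = (A * B)ᴴ := b3.symm
        _ = Bᴴ * Aᴴ := conjTranspose_mul _ _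
        _ = Bᴴ * A := by rw [hA.eq]
  exact mp_unique hBH ⟨b1, b2, b3, b4⟩

/-- A Hermitian matrix commutes with its Moore–Penrose inverse. -/
lemma pinv_comm {A B : Matrix n n ℂ} (hA : A.IsHermitian)
    (h : IsMoorePenrose A B) : Commute A B := by
  have hB : B.IsHermitian := herm_pinv hA h
  show A * B = B * A
  calc A * B = (A * B)ᴴ := h.2.2.1.symm
    _ = Bᴴ * Aᴴ := conjTranspose_mul _ _
    _ = B * A := by rw [hA.eq, hB.eq]

set_option linter.unusedSectionVars false

/-- A Hermitian matrix commuting with a Hermitian matrix `A` commutes with the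
Moore–Penrose inverse of `A`. -/
lemma commute_pinv {A B W : Matrix n n ℂ} (hA : A.IsHermitian)
    (h : IsMoorePenrose A B) (hW : W.IsHermitian) (hWA : Commute W A) :
    Commute W B := by
  obtain ⟨b1, b2, b3, b4⟩ := h
  have hB : B.IsHermitian := herm_pinv hA ⟨b1, b2, b3, b4⟩
  have hcAB : A * B = B * A := pinv_comm hA ⟨b1, b2, b3, b4⟩
  have key1 : (A * B) * (W * (A * B)) = W * (A * B) :=
    calc (A * B) * (W * (A * B)) = ((A * B) * (W * A)) * B := by simp only [mul_assoc]
      _ = ((A * B) * (A * W)) * B := by rw [hWA.eq]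
      _ = ((A * B * A) * W) * B := by simp only [mul_assoc]
      _ = (A * W) * B := by rw [b1]
      _ = (W * A) * B := by rw [← hWA.eq]
      _ = W * (A * B) := by rw [mul_assoc]
  have key2 : ((A * B) * W) * (A * B) = (A * B) * W :=
    calc ((A * B) * W) * (A * B) = ((B * A) * W) * (B * A) := by rw [hcAB]
      _ = B * ((A * W) * (B * A)) := by simp only [mul_assoc]
      _ = B * ((W * A) * (B * A)) := by rw [← hWA.eq]
      _ = (B * W) * ((A * B) * A) := by simp only [mul_assoc]
      _ = (B * W) * A := by rw [b1]
      _ = B * (W * A) := by rw [mul_assoc]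
      _ = B * (A * W) := by rw [hWA.eq]
      _ = (B * A) * W := by rw [mul_assoc]
      _ = (A * B) * W := by rw [← hcAB]
  have comm : W * (A * B) = (A * B) * W :=
    calc W * (A * B) = (A * B) * (W * (A * B)) := key1.symm
      _ = ((A * B) * W) * (A * B) := by simp only [mul_assoc]
      _ = (A * B) * W := key2
  have E1 : B * W = (B * W) * (A * B) :=
    calc B * W = (B * (A * B)) * W := by rw [← mul_assoc, b2]
      _ = B * ((A * B) * W) := by simp only [mul_assoc]
      _ = B * (W * (A * B)) := by rw [← comm]
      _ = (B * W) * (A * B) := by simp only [mul_assoc]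
  have E2 : W * B = (A * B) * (W * B) := by
    have h2 := congrArg conjTranspose E1
    rw [conjTranspose_mul (B * W) (A * B), b3, conjTranspose_mul B W, hW.eq, hB.eq] at h2
    exact h2
  show W * B = B * W
  calc W * B = (A * B) * (W * B) := E2
    _ = (B * A) * (W * B) := by rw [hcAB]
    _ = B * ((A * W) * B) := by simp only [mul_assoc]
    _ = B * ((W * A) * B) := by rw [← hWA.eq]
    _ = (B * W) * (A * B) := by simp only [mul_assoc]
    _ = B * W := E1.symm

/-- Anything commuting with a positive semidefinite matrix commutes with its square root. -/
lemma commute_sqrt {A W : Matrix n n ℂ} (hA : A.PosSemidef) (h : Commute W A) :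
    Commute W hA.sqrt := by
  set u : Matrix n n ℂ := (hA.1.eigenvectorUnitary : Matrix n n ℂ) with hu
  have hu1 : star u * u = 1 := Unitary.coe_star_mul_self _
  have hu2 : u * star u = 1 := Unitary.coe_mul_star_self _
  set d : n → ℂ := RCLike.ofReal ∘ hA.1.eigenvalues with hd
  set f : n → ℂ := RCLike.ofReal ∘ Real.sqrt ∘ hA.1.eigenvalues with hf
  have hsp : A = u * diagonal d * star u := hA.1.spectral_theorem
  have hsqrt : hA.sqrt = u * diagonal f * star u := rfl
  set W' : Matrix n n ℂ := star u * W * u with hW'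
  have e : W' * diagonal d = diagonal d * W' := by
    have e2 : star u * (W * A) * u = star u * (A * W) * u := by rw [h.eq]
    rw [hsp] at e2
    calc W' * diagonal d
        = star u * (W * (u * diagonal d * star u)) * u := by
          simp only [hW', mul_assoc, hu1, mul_one]
      _ = star u * (u * diagonal d * star u * W) * u := e2
      _ = diagonal d * W' := by
          simp only [hW', mul_assoc]
          rw [← mul_assoc (star u) u, hu1, one_mul]
  have key : ∀ i j, W' i j * f j = f i * W' i j := by
    intro i j
    have ed : W' i j * d j = d i * W' i j := by
      have := congrFun (congrFun e i) j
      rwa [mul_diagonal, diagonal_mul] at this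
    rcases eq_or_ne (W' i j) 0 with h0 | h0
    · simp [h0]
    · have hdij : d j = d i := by
        rw [mul_comm (d i) (W' i j)] at ed
        exact mul_left_cancel₀ h0 ed
      have : hA.1.eigenvalues j = hA.1.eigenvalues i := by
        have := hdij
        simp only [hd, Function.comp_apply, RCLike.ofReal_inj] at this
        exact this
      simp only [hf, Function.comp_apply, this]
      ring
  have e2 : W' * diagonal f = diagonal f * W' := by
    ext i j
    rw [mul_diagonal, diagonal_mul]
    exact key i j
  have l1 : u * W' = W * u := by
    simp only [hW', ← mul_assoc, hu2, one_mul]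
  have l2 : W' * star u = star u * W := by
    simp only [hW', mul_assoc, hu2, mul_one]
  show W * hA.sqrt = hA.sqrt * W
  rw [hsqrt]
  calc W * (u * diagonal f * star u)
      = (W * u) * diagonal f * star u := by simp only [mul_assoc]
    _ = (u * W') * diagonal f * star u := by rw [l1]
    _ = u * (W' * diagonal f) * star u := by simp only [mul_assoc]
    _ = u * (diagonal f * W') * star u := by rw [e2]
    _ = u * diagonal f * (W' * star u) := by simp only [mul_assoc]
    _ = u * diagonal f * (star u * W) := by rw [l2]
    _ = u * diagonal f * star u * W := by simp only [mul_assoc]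


end Aux

set_option maxHeartbeats 1000000

/-- For commuting positive semidefinite `F`, `S` and any matrix `X`,
`√(√F⁺ S √F⁺)⁺ · (√F⁺ X √F⁺) · √(√F⁺ S √F⁺)⁺ = √(Π_F S)⁺ · X · √(Π_F S)⁺`,
where `Π_F = F F⁺` is the projection onto the support of `F`.  Here `SF` is the
pseudo-inverse of `√F`, `Fp` the pseudo-inverse of `F`, `N` the pseudo-inverse of
`√(SF S SF)` and `R` the pseudo-inverse of `√(F Fp S)`. -/
theorem filtered_coarse_grained_povm_eq {n : Type*} [Fintype n] [DecidableEq n]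
    (F S X : Matrix n n ℂ) (hF : F.PosSemidef) (hS : S.PosSemidef)
    (hcomm : F * S = S * F)
    (SF : Matrix n n ℂ) (hSF : IsMoorePenrose hF.sqrt SF)
    (Fp : Matrix n n ℂ) (hFp : IsMoorePenrose F Fp)
    (hM : (SF * S * SF).PosSemidef)
    (N : Matrix n n ℂ) (hN : IsMoorePenrose hM.sqrt N)
    (hT : (F * Fp * S).PosSemidef)
    (R : Matrix n n ℂ) (hR : IsMoorePenrose hT.sqrt R) :
    N * (SF * X * SF) * N = R * X * R := by
  set G : Matrix n n ℂ := hF.sqrt with hGdef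
  have hG : G.PosSemidef := hF.posSemidef_sqrt
  have hGG : G * G = F := hF.sqrt_mul_self
  -- basic facts about SF
  have hSFh : SF.IsHermitian := herm_pinv hG.1 hSF
  have cGSF : Commute G SF := pinv_comm hG.1 hSF
  -- S commutes with everything in sight
  have cSG : Commute S G := commute_sqrt hF hcomm.symm
  have cSSF : Commute S SF := commute_pinv hG.1 hSF hS.1 cSG
  -- Q := sqrt of M
  set Q : Matrix n n ℂ := hM.sqrt with hQdef
  have hQ : Q.PosSemidef := hM.posSemidef_sqrt
  have hQQ : Q * Q = SF * S * SF := hM.sqrt_mul_self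
  have cGM : Commute G (SF * S * SF) :=
    (cGSF.mul_right cSG.symm).mul_right cGSF
  have cSFM : Commute SF (SF * S * SF) :=
    ((Commute.refl SF).mul_right cSSF.symm).mul_right (Commute.refl SF)
  have cGQ : Commute G Q := commute_sqrt hM cGM
  have cSFQ : Commute SF Q := commute_sqrt hM cSFM
  have hNh : N.IsHermitian := herm_pinv hQ.1 hN
  have cQN : Commute Q N := pinv_comm hQ.1 hN
  have cSFN : Commute SF N := commute_pinv hQ.1 hN hSFh cSFQ
  have cGN : Commute G N := commute_pinv hQ.1 hN hG.1 cGQ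
  -- the projection identity : F * Fp = G * SF
  have hPG : F * Fp * G = G := by
    have hY : (G - F * Fp * G) * (G - F * Fp * G)ᴴ = 0 := by
      have hYc : (G - F * Fp * G)ᴴ = G - G * (F * Fp) := by
        rw [conjTranspose_sub, hG.1.eq, conjTranspose_mul, hG.1.eq,
          hFp.2.2.1]
      rw [hYc, sub_mul, mul_sub, mul_sub]
      have t1 : G * G = F := hGG
      have t2 : G * (G * (F * Fp)) = F * (F * Fp) := by
        rw [← mul_assoc, hGG]
      have t3 : F * Fp * G * G = F := by
        rw [mul_assoc, hGG, hFp.1]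
      have t4 : F * Fp * G * (G * (F * Fp)) = F * (F * Fp) := by
        calc F * Fp * G * (G * (F * Fp)) = (F * Fp) * ((G * G) * (F * Fp)) := by
              simp only [mul_assoc]
          _ = (F * Fp) * (F * (F * Fp)) := by rw [hGG]
          _ = ((F * Fp) * F) * (F * Fp) := by simp only [mul_assoc]
          _ = F * (F * Fp) := by rw [hFp.1]
      rw [t1, t2, t3, t4]
      abel
    have := self_mul_conjTranspose_eq_zero.mp hY
    have h0 : G - F * Fp * G = 0 := this
    linear_combination (norm := abel) -h0
  have hPiF : (G * SF) * F = F := by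
    calc (G * SF) * F = ((G * SF) * G) * G := by rw [← hGG]; simp only [mul_assoc]
      _ = G * G := by rw [hSF.1]
      _ = F := hGG
  have hP : F * Fp = G * SF := by
    have hPP : (F * Fp) * (G * SF) = G * SF := by
      rw [← mul_assoc, hPG]
    have hPiP : (G * SF) * (F * Fp) = F * Fp := by
      rw [← mul_assoc, hPiF]
    have := congrArg conjTranspose hPP
    rw [conjTranspose_mul, hSF.2.2.1, hFp.2.2.1] at this
    -- this : (G * SF) * (F * Fp) = G * SF
    rw [← hPiP, this]
  -- sqrt of T equals G * Q
  have hGQpsd : (G * Q).PosSemidef := by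
    have hH : hG.sqrt.PosSemidef := hG.posSemidef_sqrt
    have cQH : Commute Q hG.sqrt := commute_sqrt hG cGQ.symm
    have : hG.sqrt * Q * hG.sqrt = G * Q := by
      calc hG.sqrt * Q * hG.sqrt = hG.sqrt * (hG.sqrt * Q) := by
            rw [mul_assoc, ← cQH.eq]
        _ = (hG.sqrt * hG.sqrt) * Q := by rw [mul_assoc]
        _ = G * Q := by rw [hG.sqrt_mul_self]
    have := hQ.mul_mul_conjTranspose_same hG.sqrt
    rwa [hH.1.eq, ‹hG.sqrt * Q * hG.sqrt = G * Q›] at this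
  have hFSS : F * SF * SF = G * SF := by
    calc F * SF * SF = G * ((G * SF) * SF) := by rw [← hGG]; simp only [mul_assoc]
      _ = G * ((SF * G) * SF) := by rw [cGSF.eq]
      _ = G * SF := by rw [hSF.2.1]
  have hsq : (G * Q) ^ 2 = F * Fp * S := by
    calc (G * Q) ^ 2 = G * Q * (G * Q) := sq (G * Q)
      _ = G * G * (Q * Q) := (cGQ.symm.mul_mul_mul_comm G Q)
      _ = F * (SF * S * SF) := by rw [hGG, hQQ]
      _ = F * (SF * (SF * S)) := by rw [mul_assoc SF, ← cSSF.eq, ← mul_assoc]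
      _ = (F * SF * SF) * S := by simp only [mul_assoc]
      _ = (G * SF) * S := by rw [hFSS]
      _ = F * Fp * S := by rw [hP]
  have hWGQ : G * Q = hT.sqrt := hGQpsd.eq_sqrt_of_sq_eq hT hsq
  -- N * SF is a Moore-Penrose inverse of G * Q
  have cQN_SFG : Commute (Q * N) (SF * G) :=
    (cSFQ.symm.mul_left cSFN.symm).mul_right (cGQ.symm.mul_left cGN.symm)
  have cGSF_QN : Commute (G * SF) (Q * N) :=
    (cGQ.mul_left cSFQ).mul_right (cGN.mul_left cSFN)
  have hNS : IsMoorePenrose (G * Q) (N * SF) := by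
    refine ⟨?_, ?_, ?_, ?_⟩
    · calc (G * Q) * (N * SF) * (G * Q)
          = G * ((Q * N) * (SF * G)) * Q := by simp only [mul_assoc]
        _ = G * ((SF * G) * (Q * N)) * Q := by rw [cQN_SFG.eq]
        _ = (G * SF * G) * (Q * N * Q) := by simp only [mul_assoc]
        _ = G * Q := by rw [hSF.1, hN.1]
    · calc (N * SF) * (G * Q) * (N * SF)
          = N * ((SF * G) * (Q * N)) * SF := by simp only [mul_assoc]
        _ = N * ((Q * N) * (SF * G)) * SF := by rw [← cQN_SFG.eq]
        _ = (N * Q * N) * (SF * G * SF) := by simp only [mul_assoc]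
        _ = N * SF := by rw [hN.2.1, hSF.2.1]
    · have hE : (G * Q) * (N * SF) = (G * SF) * (Q * N) := by
        calc (G * Q) * (N * SF) = G * ((Q * N) * SF) := by simp only [mul_assoc]
          _ = G * (SF * (Q * N)) := by rw [← (cSFQ.mul_right cSFN).eq]
          _ = (G * SF) * (Q * N) := by rw [← mul_assoc]
      rw [hE, conjTranspose_mul, hSF.2.2.1, hN.2.2.1, ← cGSF_QN.eq]
    · have hE' : (N * SF) * (G * Q) = (N * Q) * (SF * G) := by
        calc (N * SF) * (G * Q) = N * ((SF * G) * Q) := by simp only [mul_assoc]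
          _ = N * (Q * (SF * G)) := by rw [(cSFQ.mul_left cGQ).eq]
          _ = (N * Q) * (SF * G) := by rw [← mul_assoc]
      have cNQ_SFG : Commute (N * Q) (SF * G) :=
        (cSFN.symm.mul_left cSFQ.symm).mul_right (cGN.symm.mul_left cGQ.symm)
      rw [hE', conjTranspose_mul, hSF.2.2.2, hN.2.2.2]
      exact cNQ_SFG.symm.eq
  rw [← hWGQ] at hR
  have hRNS : N * SF = R := mp_unique hNS hR
  calc N * (SF * X * SF) * N = ((N * SF) * X) * (SF * N) := by simp only [mul_assoc]
    _ = ((N * SF) * X) * (N * SF) := by rw [cSFN.eq]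
    _ = R * X * R := by rw [hRNS]
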